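/- arXiv:0706.2057 — 6 statements merged into one kernel-verified Lean document; each statement's English description precedes it below -/
import Mathlib

section
/- For every α ∈ (0,1] and all x, y ∈ (0,∞), one has x^(1-α) + y^(1-α) - (x+y)^(1-α) ≥ (2 - 2^(1-α)) · min(x,y)^(1-α). -/
/-!
Write `p = 1 - α` and assume `x ≤ y`. Since `t ↦ t ^ p` is concave on `[0, ∞)`, its increments over
an interval of fixed length `x` decrease as the interval moves right, so
`(x + y) ^ p - y ^ p ≤ (2 * x) ^ p - x ^ p = (2 ^ p - 1) * x ^ p`, which rearranges to the claim.
-/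

open Real Set

theorem ConcaveOn.map_add_sub_map_le {𝕜 β : Type*} [Field 𝕜] [LinearOrder 𝕜] [IsStrictOrderedRing 𝕜]
    [AddCommGroup β] [PartialOrder β] [IsOrderedAddMonoid β] [Module 𝕜 β]
    {s : Set 𝕜} {f : 𝕜 → β} (hf : ConcaveOn 𝕜 s f) {x y h : 𝕜} (hx : x ∈ s) (hyh : y + h ∈ s)
    (hxy : x ≤ y) (hh : 0 ≤ h) :
    f (y + h) - f y ≤ f (x + h) - f x := by
  rcases hh.eq_or_lt with rfl | hh
  · simp
  have hd : 0 < y + h - x := by linarith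
  set l := h / (y + h - x) with hl
  have hl0 : 0 ≤ l := by positivity
  have hl1 : 0 ≤ 1 - l := by
    rw [sub_nonneg, div_le_one hd]
    linarith
  have hlx : l * (y + h - x) = h := div_mul_cancel₀ h hd.ne'
  have hleft := hf.2 hx hyh hl1 hl0 (by ring)
  have hright := hf.2 hx hyh hl0 hl1 (by ring)
  have e1 : (1 - l) • x + l • (y + h) = x + h := by simp only [smul_eq_mul]; linear_combination hlx
  have e2 : l • x + (1 - l) • (y + h) = y := by simp only [smul_eq_mul]; linear_combination -hlx
  rw [e1] at hleft
  rw [e2] at hright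
  have hsum : (1 - l) • f x + l • f (y + h) + (l • f x + (1 - l) • f (y + h)) = f x + f (y + h) := by
    simp only [sub_smul, one_smul]
    abel
  rw [sub_le_sub_iff]
  calc f (y + h) + f x = (1 - l) • f x + l • f (y + h) + (l • f x + (1 - l) • f (y + h)) := by
        rw [hsum, add_comm]
    _ ≤ f (x + h) + f y := add_le_add hleft hright

theorem stmt_1 (α : ℝ) (hα : α ∈ Set.Ioc (0:ℝ) 1) (x y : ℝ) (hx : 0 < x) (hy : 0 < y) :
    x ^ (1 - α) + y ^ (1 - α) - (x + y) ^ (1 - α) ≥ (2 - 2 ^ (1 - α)) * min x y ^ (1 - α) := by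
  wlog hxy : x ≤ y generalizing x y
  · have := this y x hy hx (le_of_not_ge hxy)
    rwa [min_comm, add_comm y, add_comm (y ^ _)] at this
  have hconc : ConcaveOn ℝ (Ici 0) (fun t : ℝ ↦ t ^ (1 - α)) :=
    concaveOn_rpow (by linarith [hα.2]) (by linarith [hα.1])
  have hincr := hconc.map_add_sub_map_le hx.le (by simp only [mem_Ici]; positivity) hxy hx.le
  rw [← two_mul, mul_rpow zero_le_two hx.le] at hincr
  rw [min_eq_left hxy, add_comm x y]
  linarith
end

section
/- The function φ(x) = x^(1-α) · min(x,b)^α is subadditive on (0,∞): φ(x+y) ≤ φ(x) + φ(y) for all x, y > 0. -/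
theorem stmt_2 (α : ℝ) (hα : α ∈ Set.Ioc (0:ℝ) 1) (b : ℝ) (hb : 0 < b)
    (x y : ℝ) (hx : 0 < x) (hy : 0 < y) :
    (x + y) ^ (1 - α) * min (x + y) b ^ α ≤
      x ^ (1 - α) * min x b ^ α + y ^ (1 - α) * min y b ^ α := by
  obtain ⟨hα0, hα1⟩ := hα
  have hxy : 0 < x + y := by linarith
  have key : ∀ t : ℝ, 0 < t → t ^ (1 - α) * min t b ^ α = t * (min t b / t) ^ α := by
    intro t ht
    rw [Real.div_rpow (le_of_lt (lt_min ht hb)) ht.le, Real.rpow_sub ht, Real.rpow_one]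
    ring
  have hmono : ∀ s t : ℝ, 0 < s → 0 < t → s ≤ t → min t b / t ≤ min s b / s := by
    intro s t hs ht hst
    rw [div_le_div_iff₀ ht hs]
    rcases le_total t b with h | h
    · rw [min_eq_left h, min_eq_left (hst.trans h)]; nlinarith
    · rw [min_eq_right h]
      rcases le_total s b with h' | h'
      · rw [min_eq_left h']; nlinarith
      · rw [min_eq_right h']; nlinarith
  have hgnn : 0 ≤ min (x + y) b / (x + y) := by positivity
  have h1 : x * (min (x + y) b / (x + y)) ^ α ≤ x * (min x b / x) ^ α :=
    mul_le_mul_of_nonneg_left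
      (Real.rpow_le_rpow hgnn (hmono x (x + y) hx hxy (by linarith)) hα0.le) hx.le
  have h2 : y * (min (x + y) b / (x + y)) ^ α ≤ y * (min y b / y) ^ α :=
    mul_le_mul_of_nonneg_left
      (Real.rpow_le_rpow hgnn (hmono y (x + y) hy hxy (by linarith)) hα0.le) hy.le
  rw [key (x + y) hxy, key x hx, key y hy]
  calc (x + y) * (min (x + y) b / (x + y)) ^ α
      = x * (min (x + y) b / (x + y)) ^ α + y * (min (x + y) b / (x + y)) ^ α := by ring
    _ ≤ x * (min x b / x) ^ α + y * (min y b / y) ^ α := add_le_add h1 h2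
end

section
/- Let α ∈ (0,1], c > 0, and let K : (0,∞)² → [0,∞) satisfy K(x,y) ≥ c(x^α y + x y^α) for all x, y > 0. Then for all x, y > 0, K(x,y) · (x^(1-α) + y^(1-α) - (x+y)^(1-α)) ≥ (2 - 2^(1-α)) · c · x · y. -/
/-!
By concavity of `t ↦ t ^ β` (`β = 1 - α`), its increments over intervals of length `x ≤ y`
decrease from `[x, 2x]` to `[y, x + y]`; this gives `x ^ β + y ^ β - (x + y) ^ β ≥ (2 - 2 ^ β) x ^ β`
for the smaller variable `x`. Multiplying by the part `c x ^ α y` of the lower bound on `K` and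
using `x ^ α x ^ β = x` yields the claim.
-/

open Set

theorem ConcaveOn.map_add_sub_map_le_s4 {s : Set ℝ} {f : ℝ → ℝ} (hf : ConcaveOn ℝ s f)
    {a b d : ℝ} (ha : a ∈ s) (hbd : b + d ∈ s) (hab : a ≤ b) (hd : 0 ≤ d) :
    f (b + d) - f b ≤ f (a + d) - f a := by
  rcases (add_nonneg (sub_nonneg.2 hab) hd).eq_or_lt with hL | hL
  · obtain rfl : d = 0 := by linarith
    obtain rfl : b = a := by linarith
    simp
  -- `b` and `a + d` are convex combinations of `a` and `b + d` with swapped weights `θ, 1 - θ`.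
  set θ := d / (b - a + d)
  have hθ0 : 0 ≤ θ := div_nonneg hd hL.le
  have hθ1 : 0 ≤ 1 - θ := by
    rw [sub_nonneg, div_le_one hL]
    linarith
  have hb := hf.2 ha hbd hθ0 hθ1 (by ring)
  have had := hf.2 ha hbd hθ1 hθ0 (by ring)
  have hb_eq : θ • a + (1 - θ) • (b + d) = b := by
    simp only [θ, smul_eq_mul]
    field_simp
    ring
  have had_eq : (1 - θ) • a + θ • (b + d) = a + d := by
    simp only [θ, smul_eq_mul]
    field_simp
    ring
  rw [hb_eq] at hb
  rw [had_eq] at had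
  simp only [smul_eq_mul] at hb had
  linarith

theorem Real.two_sub_two_rpow_mul_rpow_le {β x y : ℝ} (hβ0 : 0 ≤ β) (hβ1 : β ≤ 1)
    (hx : 0 ≤ x) (hxy : x ≤ y) :
    (2 - 2 ^ β) * x ^ β ≤ x ^ β + y ^ β - (x + y) ^ β := by
  have h := (Real.concaveOn_rpow hβ0 hβ1).map_add_sub_map_le_s4 (a := x) (b := y) (d := x)
    hx (by simp only [mem_Ici]; linarith) hxy hx
  rw [← two_mul, Real.mul_rpow zero_le_two hx, add_comm y x] at h
  linarith

theorem Real.two_sub_two_rpow_mul_le_of_le {α x y : ℝ} (hα : α ∈ Ioc 0 1) (hx : 0 < x)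
    (hxy : x ≤ y) :
    (2 - 2 ^ (1 - α)) * (x * y) ≤
      (x ^ α * y + x * y ^ α) * (x ^ (1 - α) + y ^ (1 - α) - (x + y) ^ (1 - α)) := by
  obtain ⟨hα0, hα1⟩ := hα
  have hy : 0 < y := hx.trans_le hxy
  have hD :=
    Real.two_sub_two_rpow_mul_rpow_le (β := 1 - α) (by linarith) (by linarith) hx.le hxy
  have h2 : (2 : ℝ) ^ (1 - α) ≤ 2 := by
    simpa using Real.rpow_le_rpow_of_exponent_le one_le_two (by linarith : 1 - α ≤ 1)
  have hxx : x ^ α * x ^ (1 - α) = x := by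
    rw [← Real.rpow_add hx, add_sub_cancel, Real.rpow_one]
  calc (2 - 2 ^ (1 - α)) * (x * y) = x ^ α * y * ((2 - 2 ^ (1 - α)) * x ^ (1 - α)) := by
        linear_combination (-(2 - 2 ^ (1 - α)) * y) * hxx
    _ ≤ (x ^ α * y + x * y ^ α) * (x ^ (1 - α) + y ^ (1 - α) - (x + y) ^ (1 - α)) := by
        have hxβ : 0 ≤ (2 - 2 ^ (1 - α)) * x ^ (1 - α) :=
          mul_nonneg (sub_nonneg.2 h2) (by positivity)
        exact mul_le_mul (le_add_of_nonneg_right (by positivity)) hD hxβ (by positivity)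

theorem Real.two_sub_two_rpow_mul_le {α x y : ℝ} (hα : α ∈ Ioc 0 1) (hx : 0 < x)
    (hy : 0 < y) :
    (2 - 2 ^ (1 - α)) * (x * y) ≤
      (x ^ α * y + x * y ^ α) * (x ^ (1 - α) + y ^ (1 - α) - (x + y) ^ (1 - α)) := by
  rcases le_total x y with hxy | hyx
  · exact Real.two_sub_two_rpow_mul_le_of_le hα hx hxy
  · convert Real.two_sub_two_rpow_mul_le_of_le hα hy hyx using 1
    · ring
    · rw [add_comm y x]
      ring

theorem stmt_4_general (α : ℝ) (hα : α ∈ Set.Ioc (0:ℝ) 1) (c : ℝ) (hc : 0 < c)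
    (K : ℝ → ℝ → ℝ)
    (hKc : ∀ x y, 0 < x → 0 < y → c * (x ^ α * y + x * y ^ α) ≤ K x y)
    (x y : ℝ) (hx : 0 < x) (hy : 0 < y) :
    K x y * (x ^ (1 - α) + y ^ (1 - α) - (x + y) ^ (1 - α)) ≥ (2 - 2 ^ (1 - α)) * c * x * y := by
  have hD : 0 ≤ x ^ (1 - α) + y ^ (1 - α) - (x + y) ^ (1 - α) :=
    sub_nonneg.2 <|
      Real.rpow_add_le_add_rpow hx.le hy.le (by linarith [hα.2]) (by linarith [hα.1])
  calc (2 - 2 ^ (1 - α)) * c * x * y = c * ((2 - 2 ^ (1 - α)) * (x * y)) := by ring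
    _ ≤ c * ((x ^ α * y + x * y ^ α) * (x ^ (1 - α) + y ^ (1 - α) - (x + y) ^ (1 - α))) :=
        mul_le_mul_of_nonneg_left (Real.two_sub_two_rpow_mul_le hα hx hy) hc.le
    _ ≤ K x y * (x ^ (1 - α) + y ^ (1 - α) - (x + y) ^ (1 - α)) := by
        rw [← mul_assoc]
        exact mul_le_mul_of_nonneg_right (hKc x y hx hy) hD

theorem stmt_4 (α : ℝ) (hα : α ∈ Set.Ioc (0:ℝ) 1) (c : ℝ) (hc : 0 < c)
    (K : ℝ → ℝ → ℝ) (hK0 : ∀ x y, 0 < x → 0 < y → 0 ≤ K x y)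
    (hKc : ∀ x y, 0 < x → 0 < y → c * (x ^ α * y + x * y ^ α) ≤ K x y)
    (x y : ℝ) (hx : 0 < x) (hy : 0 < y) :
    K x y * (x ^ (1 - α) + y ^ (1 - α) - (x + y) ^ (1 - α)) ≥ (2 - 2 ^ (1 - α)) * c * x * y :=
  stmt_4_general α hα c hc K hKc x y hx hy
end

section
/- For γ ∈ (0,1), the unique time t at which the total mass of the explicit solution of the Flory equation with multiplicative kernel and monodisperse initial data has dropped by γ, i.e. the infimum of { t ≥ 0 : 1 − m(t) ≥ γ } where m(t) = 1 for t ≤ 1 and m(t) = t*(t)/t for t > 1 with t*(t) ∈ (0,1) the unique solution of t* e^{−t*} = t e^{−t}, equals −ln(1−γ)/γ. -/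
open Set Real

/-!
With `x = 1 - γ` and `T = -log x / γ` we have `exp (γ T) = 1 / x`, hence `(x T) e^{-x T} = T e^{-T}`;
since `1 < T` and `x T < 1`, injectivity of `s ↦ s e^{-s}` on `[0, 1]` gives `t*(T) = x T`, i.e. `m T = 1 - γ`.
Conversely, if `t < T` and `m t ≤ x` then `x t < 1`, so monotonicity turns `t* ≤ x t` into
`t e^{-t} ≤ (x t) e^{-x t}`, i.e. `exp (-γ t) ≤ x`, which is `T ≤ t`.
-/

lemma strictMonoOn_mul_exp_neg : StrictMonoOn (fun s : ℝ => s * exp (-s)) (Icc 0 1) := by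
  apply strictMonoOn_of_deriv_pos (convex_Icc 0 1) (by fun_prop)
  intro y hy
  rw [interior_Icc] at hy
  have hd : HasDerivAt (fun s : ℝ => s * exp (-s)) (1 * exp (-y) + y * (exp (-y) * (-1))) y :=
    (hasDerivAt_id y).mul (hasDerivAt_id y).neg.exp
  rw [hd.deriv]
  nlinarith [exp_pos (-y), hy.2]

lemma one_lt_neg_log_one_sub_div {γ : ℝ} (hγ0 : 0 < γ) (hγ1 : γ < 1) :
    1 < -log (1 - γ) / γ := by
  rw [lt_div_iff₀ hγ0]
  linarith [log_lt_sub_one_of_pos (by linarith : 0 < 1 - γ) (by linarith : 1 - γ ≠ 1)]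

lemma one_sub_mul_neg_log_one_sub_div_lt_one {γ : ℝ} (hγ0 : 0 < γ) (hγ1 : γ < 1) :
    (1 - γ) * (-log (1 - γ) / γ) < 1 := by
  have hx : 0 < 1 - γ := by linarith
  -- `log (1 / (1 - γ)) < 1 / (1 - γ) - 1`, multiplied by `1 - γ`
  have h := log_lt_sub_one_of_pos (one_div_pos.mpr hx)
    (by rw [ne_eq, div_eq_one_iff_eq hx.ne']; linarith)
  rw [log_div one_ne_zero hx.ne', log_one, zero_sub, lt_sub_iff_add_lt, lt_div_iff₀ hx] at h
  rw [mul_div_assoc', div_lt_one hγ0]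
  linarith

lemma one_sub_mul_exp_neg_eq {γ : ℝ} (hγ0 : 0 < γ) (hγ1 : γ < 1) :
    let T := -log (1 - γ) / γ
    (1 - γ) * T * exp (-((1 - γ) * T)) = T * exp (-T) := by
  intro T
  have hexp : exp (γ * T) = 1 / (1 - γ) := by
    rw [show γ * T = -log (1 - γ) by simp only [T]; field_simp, exp_neg,
      exp_log (by linarith), one_div]
  rw [show -((1 - γ) * T) = -T + γ * T by ring, exp_add, hexp]
  field_simp [(by linarith : (1 : ℝ) - γ ≠ 0)]

lemma neg_log_one_sub_div_le_of_mul_exp_neg_le {γ t : ℝ} (hγ0 : 0 < γ) (ht : 0 < t)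
    (h : t * exp (-t) ≤ (1 - γ) * t * exp (-((1 - γ) * t))) :
    -log (1 - γ) / γ ≤ t := by
  have hexp : exp (-(γ * t)) ≤ 1 - γ := by
    rw [show -t = -((1 - γ) * t) + -(γ * t) by ring, exp_add] at h
    nlinarith [mul_pos ht (exp_pos (-((1 - γ) * t)))]
  have hlog := log_le_log (exp_pos _) hexp
  rw [log_exp] at hlog
  rw [div_le_iff₀ hγ0]
  linarith

theorem stmt_9 (γ : ℝ) (hγ : γ ∈ Ioo (0:ℝ) 1)
    (tstar : ℝ → ℝ)
    (htstar : ∀ t, 1 < t → tstar t ∈ Ioo (0:ℝ) 1 ∧ tstar t * exp (-tstar t) = t * exp (-t))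
    (m : ℝ → ℝ)
    (hm : ∀ t, 0 ≤ t → m t = if t ≤ 1 then 1 else tstar t / t) :
    sInf {t : ℝ | 0 ≤ t ∧ γ ≤ 1 - m t} = -Real.log (1 - γ) / γ := by
  obtain ⟨hγ0, hγ1⟩ := hγ
  set T := -log (1 - γ) / γ
  have hT1 : 1 < T := one_lt_neg_log_one_sub_div hγ0 hγ1
  have hxT1 : (1 - γ) * T < 1 := one_sub_mul_neg_log_one_sub_div_lt_one hγ0 hγ1
  have hxT0 : 0 < (1 - γ) * T := mul_pos (by linarith) (by linarith)
  obtain ⟨htsT, htsT_eq⟩ := htstar T hT1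
  have htstarT : tstar T = (1 - γ) * T :=
    strictMonoOn_mul_exp_neg.injOn (Ioo_subset_Icc_self htsT) ⟨hxT0.le, hxT1.le⟩
      (by rw [htsT_eq, one_sub_mul_exp_neg_eq hγ0 hγ1])
  refine IsLeast.csInf_eq ⟨⟨by linarith, ?_⟩, ?_⟩
  · rw [hm T (by linarith), if_neg hT1.not_ge, htstarT, mul_div_cancel_right₀ _ (by linarith)]
    linarith
  rintro t ⟨ht0, hγt⟩
  by_contra! htT
  rw [hm t ht0] at hγt
  split_ifs at hγt with ht1
  · linarith
  obtain ⟨hst, hst_eq⟩ := htstar t (not_le.mp ht1)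
  have htpos : 0 < t := by linarith
  have hle : tstar t ≤ (1 - γ) * t := by
    rw [le_sub_iff_add_le, ← le_sub_iff_add_le', div_le_iff₀ htpos] at hγt
    exact hγt
  have hxt1 : (1 - γ) * t ≤ 1 := by nlinarith
  have hmono := strictMonoOn_mul_exp_neg.monotoneOn (Ioo_subset_Icc_self hst)
    ⟨(mul_pos (by linarith) htpos).le, hxt1⟩ hle
  rw [hst_eq] at hmono
  exact htT.not_ge (neg_log_one_sub_div_le_of_mul_exp_neg_le hγ0 htpos hmono)
end

section
/- The sequence c(t,k) = (k^{k−2}/k!) t^{k−1} e^{−kt}, k ≥ 1, satisfies for every t ≥ 0 and every k ≥ 1 the Flory/Smoluchowski discrete coagulation identity with multiplicative kernel: ∂_t c(t,k) = (1/2) Σ_{j=1}^{k−1} j(k−j) c(t,j) c(t,k−j) − k c(t,k) Σ_{j≥1} j c(t,j) − k c(t,k) (1 − Σ_{j≥1} j c(t,j)), i.e. ∂_t c(t,k) = (1/2) Σ_{j=1}^{k−1} j(k−j) c(t,j) c(t,k−j) − k c(t,k). -/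
/-!
Both sides are polynomials in `t` times `exp (-k t)`, and in terms of
`k c(t,k) = k^(k-1)/k! t^(k-1) e^(-kt)` the identity reduces to the convolution
`∑_{j=1}^{k-1} C(k,j) j^(j-1) (k-j)^(k-j-1) = 2 (k-1) k^(k-2)`.
Symmetrising `j ↔ k - j`, `k` times this sum is `2 ∑_{j=1}^{k-1} C(k,j) j^(j-1) (k-j)^(k-j)`, which
the Abel-type identity `∑_{j=1}^n C(n,j) j^(j-1) (y+n-j)^(n-j) = n (y+n)^(n-1)` evaluates at
`y = 0`. That identity follows by induction on `n`: both sides have `y`-derivative `n` times the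
previous instance at `y + 1`, and for `n ≥ 2` both vanish at `y = -n`, where the left side is an
`n`-th finite difference of a polynomial of degree `n - 1`.
-/

open Real

/-- The explicit solution `c(t,k) = (k^{k-2}/k!) t^{k-1} e^{-kt}` of the Flory equation
with multiplicative kernel and monodisperse initial data. -/
noncomputable def floryC (t : ℝ) (k : ℕ) : ℝ :=
  (k : ℝ) ^ ((k : ℝ) - 2) / (Nat.factorial k) * t ^ (k - 1) * Real.exp (-(k : ℝ) * t)

open Finset

theorem sum_range_neg_one_pow_mul_choose_mul_pow_eq_zero {R : Type*} [CommRing R] {j n : ℕ}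
    (h : j < n) : ∑ k ∈ range (n + 1), (-1 : R) ^ (n - k) * n.choose k * (k : R) ^ j = 0 := by
  have := congr_fun (fwdDiff_iter_pow_eq_zero_of_lt (R := R) h) 0
  rw [fwdDiff_iter_eq_sum_shift] at this
  simpa [zsmul_eq_mul] using this

/-- The `x`-derivative at `x = 0` of Abel's sum `∑ₖ C(n,k) x (x+k)^(k-1) (y+n-k)^(n-k)`. -/
noncomputable def abelSum (n : ℕ) (y : ℝ) : ℝ :=
  ∑ k ∈ Icc 1 n, (n.choose k : ℝ) * (k : ℝ) ^ (k - 1) * (y + (n - k : ℕ)) ^ (n - k)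

theorem hasDerivAt_abelSum (n : ℕ) (y : ℝ) :
    HasDerivAt (abelSum (n + 1)) ((n + 1) * abelSum n (y + 1)) y := by
  have hterm (k : ℕ) : HasDerivAt
      (fun y : ℝ =>
        ((n + 1).choose k : ℝ) * (k : ℝ) ^ (k - 1) * (y + (n + 1 - k : ℕ)) ^ (n + 1 - k))
      (((n + 1).choose k : ℝ) * (k : ℝ) ^ (k - 1) *
        ((n + 1 - k : ℕ) * (y + (n + 1 - k : ℕ)) ^ (n - k))) y := by
    simpa [Nat.sub_sub, add_comm 1 k] using
      (((hasDerivAt_id y).add_const _).fun_pow (n + 1 - k)).const_mul _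
  refine (HasDerivAt.fun_sum fun k _ => hterm k).congr_deriv ?_
  rw [sum_Icc_succ_top (by omega), abelSum, mul_sum]
  simp only [Nat.sub_self, Nat.cast_zero, zero_mul, mul_zero, add_zero]
  refine sum_congr rfl fun k hk => ?_
  have hkn : k ≤ n := (mem_Icc.mp hk).2
  have hchoose : ((n + 1).choose k : ℝ) * (n + 1 - k : ℕ) = (n + 1) * n.choose k := by
    exact_mod_cast (Nat.choose_mul_succ_eq n k).symm.trans (mul_comm _ _)
  have hshift : y + (n + 1 - k : ℕ) = y + 1 + (n - k : ℕ) := by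
    push_cast [Nat.cast_sub hkn, Nat.cast_sub (hkn.trans n.le_succ)]; ring
  rw [hshift]
  linear_combination (k : ℝ) ^ (k - 1) * (y + 1 + (n - k : ℕ)) ^ (n - k) * hchoose

theorem abelSum_neg_self {n : ℕ} (hn : 2 ≤ n) : abelSum n (-n) = 0 := by
  have hsum := sum_range_neg_one_pow_mul_choose_mul_pow_eq_zero (R := ℝ) (by omega : n - 1 < n)
  rw [range_eq_Ico, sum_eq_sum_Ico_succ_bot (by omega), Ico_add_one_right_eq_Icc] at hsum
  rw [abelSum, ← hsum, Nat.cast_zero, zero_pow (by omega), mul_zero, zero_add]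
  refine sum_congr rfl fun k hk => ?_
  obtain ⟨hk1, hkn⟩ := mem_Icc.mp hk
  rw [Nat.cast_sub hkn, show -(n : ℝ) + (n - k) = -1 * k by ring, mul_pow,
    show n - 1 = (k - 1) + (n - k) by omega, pow_add]
  ring

theorem abelSum_eq : ∀ (n : ℕ) (y : ℝ), abelSum n y = n * (y + n) ^ (n - 1)
  | 0, y => by simp [abelSum]
  | 1, y => by simp [abelSum]
  | n + 2, y => by
    have hderiv (z : ℝ) : HasDerivAt
        (fun y => abelSum (n + 2) y - (n + 2 : ℕ) * (y + (n + 2 : ℕ)) ^ (n + 1)) 0 z := by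
      have := (hasDerivAt_abelSum (n + 1) z).sub
        ((((hasDerivAt_id' z).add_const ((n + 2 : ℕ) : ℝ)).fun_pow (n + 1)).const_mul
          ((n + 2 : ℕ) : ℝ))
      refine this.congr_deriv ?_
      rw [abelSum_eq (n + 1) (z + 1)]
      push_cast
      ring
    have hconst := is_const_of_deriv_eq_zero (fun z => (hderiv z).differentiableAt)
      (fun z => (hderiv z).deriv) y (-(n + 2 : ℕ))
    rw [abelSum_neg_self (by omega)] at hconst
    simpa [sub_eq_zero] using hconst

theorem natCast_mul_sum_choose_mul_pow_mul_pow (n : ℕ) :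
    (n : ℝ) * ∑ k ∈ Ico 1 n,
        (n.choose k : ℝ) * (k : ℝ) ^ (k - 1) * ((n - k : ℕ) : ℝ) ^ (n - k - 1)
      = 2 * ((n - 1 : ℕ) : ℝ) * (n : ℝ) ^ (n - 1) := by
  set f : ℕ → ℝ := fun k => (n.choose k : ℝ) * (k : ℝ) ^ (k - 1) * ((n - k : ℕ) : ℝ) ^ (n - k)
  have hsplit : (n : ℝ) * ∑ k ∈ Ico 1 n,
      (n.choose k : ℝ) * (k : ℝ) ^ (k - 1) * ((n - k : ℕ) : ℝ) ^ (n - k - 1)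
      = ∑ k ∈ Ico 1 n, f (n - k) + ∑ k ∈ Ico 1 n, f k := by
    rw [mul_sum, ← sum_add_distrib]
    refine sum_congr rfl fun k hk => ?_
    obtain ⟨hk1, hkn⟩ := mem_Ico.mp hk
    have hn : (n : ℝ) = k + (n - k : ℕ) := by rw [Nat.cast_sub hkn.le]; ring
    simp only [f, Nat.sub_sub_self hkn.le, Nat.choose_symm hkn.le]
    rw [hn]
    obtain ⟨b, hb⟩ : ∃ b, n - k = b + 1 := ⟨n - k - 1, by omega⟩
    rw [hb]
    obtain ⟨a, rfl⟩ : ∃ a, k = a + 1 := ⟨k - 1, by omega⟩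
    simp only [Nat.add_sub_cancel]
    push_cast
    ring
  have hreflect : ∑ k ∈ Ico 1 n, f (n - k) = ∑ k ∈ Ico 1 n, f k := by
    simpa using sum_Ico_reflect f 1 n.le_succ
  have habel : ∑ k ∈ Ico 1 n, f k = (n - 1 : ℕ) * (n : ℝ) ^ (n - 1) := by
    rcases n with _ | m
    · simp
    have h := abelSum_eq (m + 1) 0
    rw [abelSum, ← Ico_add_one_right_eq_Icc, sum_Ico_succ_top (by omega)] at h
    simp only [f, zero_add, Nat.add_sub_cancel] at h ⊢
    simp only [Nat.choose_self, Nat.cast_one, Nat.cast_add, one_mul, tsub_self,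
      CharP.cast_eq_zero, pow_zero, mul_one] at h ⊢
    linear_combination h
  rw [hsplit, hreflect, habel]
  ring

theorem mul_rpow_natCast_sub_two {x : ℝ} (hx : x ≠ 0) {n : ℕ} (hn : 1 ≤ n) :
    x * x ^ ((n : ℝ) - 2) = x ^ (n - 1) := by
  rw [show (n : ℝ) - 2 = ((n - 1 : ℕ) : ℝ) - 1 by push_cast [Nat.cast_sub hn]; ring,
    rpow_sub_one hx, rpow_natCast, mul_div_cancel₀ _ hx]

theorem natCast_mul_floryC {k : ℕ} (hk : 1 ≤ k) (t : ℝ) :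
    k * floryC t k = k ^ (k - 1) / k.factorial * t ^ (k - 1) * exp (-k * t) := by
  rw [floryC, ← mul_rpow_natCast_sub_two (Nat.cast_ne_zero.mpr (by omega)) hk]
  ring

theorem hasDerivAt_floryC (k : ℕ) (t : ℝ) :
    HasDerivAt (fun s => floryC s k)
      ((k : ℝ) ^ ((k : ℝ) - 2) / k.factorial * ((k - 1 : ℕ) * t ^ (k - 2) - k * t ^ (k - 1))
        * exp (-k * t)) t := by
  have hexp : HasDerivAt (fun s => exp (-k * s)) (exp (-k * t) * -k) t := by
    simpa using ((hasDerivAt_id t).const_mul (-(k : ℝ))).exp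
  refine (((hasDerivAt_pow (k - 1) t).const_mul _).mul hexp).congr_deriv ?_
  rw [Nat.sub_sub]
  ring

theorem natCast_mul_floryC_mul_natCast_mul_floryC {j k : ℕ} (hj : 1 ≤ j) (hjk : j < k) (t : ℝ) :
    j * floryC t j * ((k - j : ℕ) * floryC t (k - j))
      = k.choose j * (j : ℝ) ^ (j - 1) * ((k - j : ℕ) : ℝ) ^ (k - j - 1)
        * (t ^ (k - 2) * exp (-k * t) / k.factorial) := by
  rw [natCast_mul_floryC hj, natCast_mul_floryC (by omega)]
  have hfact : (k.choose j : ℝ) * j.factorial * (k - j).factorial = k.factorial := by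
    exact_mod_cast Nat.choose_mul_factorial_mul_factorial hjk.le
  have hpow : t ^ (j - 1) * t ^ (k - j - 1) = t ^ (k - 2) := by
    rw [← pow_add]; congr 1; omega
  have hexp : exp (-j * t) * exp (-((k - j : ℕ) : ℝ) * t) = exp (-k * t) := by
    rw [← exp_add, Nat.cast_sub hjk.le]; ring_nf
  have hchoose : (k.choose j : ℝ) ≠ 0 := by exact_mod_cast (Nat.choose_pos hjk.le).ne'
  rw [← hfact, ← hpow, ← hexp]
  field_simp

theorem stmt_11_general (k : ℕ) (hk : 1 ≤ k) (t : ℝ) :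
    HasDerivAt (fun s => floryC s k)
      ((1 / 2) * ∑ j ∈ Finset.Ico 1 k,
          (j : ℝ) * ((k - j : ℕ) : ℝ) * floryC t j * floryC t (k - j)
        - (k : ℝ) * floryC t k) t := by
  set S := ∑ j ∈ Ico 1 k, k.choose j * (j : ℝ) ^ (j - 1) * ((k - j : ℕ) : ℝ) ^ (k - j - 1)
  have hsum : ∑ j ∈ Ico 1 k, (j : ℝ) * ((k - j : ℕ) : ℝ) * floryC t j * floryC t (k - j)
      = S * (t ^ (k - 2) * exp (-k * t) / k.factorial) := by
    rw [sum_mul]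
    refine sum_congr rfl fun j hj => ?_
    rw [← natCast_mul_floryC_mul_natCast_mul_floryC (mem_Ico.mp hj).1 (mem_Ico.mp hj).2]
    ring
  have hcoef : (k : ℝ) ^ ((k : ℝ) - 2) / k.factorial * (k - 1 : ℕ) = S / (2 * k.factorial) := by
    have hk0 : (k : ℝ) ≠ 0 := Nat.cast_ne_zero.mpr (by omega)
    refine mul_left_cancel₀ hk0 ?_
    have hS : (k : ℝ) * S = 2 * (k - 1 : ℕ) * (k : ℝ) ^ (k - 1) :=
      natCast_mul_sum_choose_mul_pow_mul_pow k
    calc (k : ℝ) * ((k : ℝ) ^ ((k : ℝ) - 2) / k.factorial * (k - 1 : ℕ))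
        = (k * (k : ℝ) ^ ((k : ℝ) - 2)) * (k - 1 : ℕ) / k.factorial := by ring
      _ = k * (S / (2 * k.factorial)) := by
        rw [mul_rpow_natCast_sub_two hk0 hk, mul_div_assoc', hS]
        ring
  refine (hasDerivAt_floryC k t).congr_deriv ?_
  rw [hsum, floryC]
  linear_combination t ^ (k - 2) * exp (-k * t) * hcoef

theorem stmt_11 (k : ℕ) (hk : 1 ≤ k) (t : ℝ) (ht : 0 ≤ t) :
    HasDerivAt (fun s => floryC s k)
      ((1 / 2) * ∑ j ∈ Finset.Ico 1 k,
          (j : ℝ) * ((k - j : ℕ) : ℝ) * floryC t j * floryC t (k - j)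
        - (k : ℝ) * floryC t k) t :=
  stmt_11_general k hk t
end

section
/- Let ν be a finite measure on (0,∞), b > 0, and φ : (0,∞) → ℝ bounded. Then |∫∫ K(x,y) Δφ(x,y) (1 − χ_b(x)χ_b(y)) dν(x)dν(y)| ≤ 6C‖φ‖_∞ [ (∫(1+x)dν)(∫ y 1_{[b,∞)}(y)dν(y)) + b^{α−1}(∫ x 1_{[b,∞)}(x)dν(x))(∫ y dν(y)) ], where K satisfies 0 ≤ K(x,y) ≤ C(x^α y + x y^α), Δφ(x,y) = φ(x+y) − φ(x) − φ(y), and χ_b : (0,∞) → [0,1] satisfies χ_b = 1 on (0,b] and χ_b = 0 on [b+1,∞). -/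
open MeasureTheory Set

set_option maxHeartbeats 1000000 in
theorem stmt_18 (ν : Measure ℝ) [IsFiniteMeasure ν]
    (hsupp : ν (Iic 0) = 0)
    (α : ℝ) (hα : α ∈ Ioc (0:ℝ) 1) (C : ℝ) (hC : 0 < C)
    (b : ℝ) (hb : 1 ≤ b)
    (hint : Integrable (fun x => 1 + x) ν)
    (K : ℝ → ℝ → ℝ)
    (hK : ∀ x y : ℝ, 0 < x → 0 < y →
      K x y ∈ Icc 0 (C * (x ^ α * y + x * y ^ α)))
    (φ : ℝ → ℝ) (Mφ : ℝ) (hφ : ∀ x, |φ x| ≤ Mφ)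
    (χ : ℝ → ℝ) (hχ_range : ∀ x, χ x ∈ Icc (0:ℝ) 1)
    (hχ_one : ∀ x, 0 < x → x ≤ b → χ x = 1)
    (hχ_zero : ∀ x, b + 1 ≤ x → χ x = 0) :
    |∫ x, ∫ y, K x y * (φ (x + y) - φ x - φ y) * (1 - χ x * χ y) ∂ν ∂ν|
      ≤ 6 * C * Mφ *
        ((∫ x, (1 + x) ∂ν) * (∫ y in Ici b, y ∂ν)
          + b ^ (α - 1) * (∫ x in Ici b, x ∂ν) * (∫ y, y ∂ν)) := by
  have hMφ : 0 ≤ Mφ := le_trans (abs_nonneg _) (hφ 0)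
  have hb0 : (0:ℝ) < b := by linarith
  have hbp : 0 < b ^ (α - 1) := Real.rpow_pos_of_pos hb0 _
  have h3 : 0 ≤ 3 * C * Mφ := by
    have : (0:ℝ) ≤ 3 * C := by linarith
    exact mul_nonneg this hMφ
  -- a.e. positivity
  have hpos : ∀ᵐ x ∂ν, 0 < x := by
    rw [ae_iff]
    have hset : {x : ℝ | ¬ 0 < x} = Iic 0 := by ext z; simp [not_lt]
    rw [hset]; exact hsupp
  -- integrabilities
  have hx_int : Integrable (fun x : ℝ => x) ν := by
    have h := hint.sub (integrable_const (1:ℝ))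
    exact h.congr (Filter.Eventually.of_forall fun x => by simp)
  have hJ_int : Integrable ((Ici b).indicator (fun s : ℝ => s)) ν :=
    hx_int.indicator measurableSet_Ici
  -- generic integrability + integral computation
  have haux : ∀ d1 d2 d3 : ℝ,
      Integrable (fun y : ℝ => d1 * y + d2 * (1 + y)
        + d3 * (Ici b).indicator (fun s : ℝ => s) y) ν ∧
      ∫ y, (d1 * y + d2 * (1 + y)
        + d3 * (Ici b).indicator (fun s : ℝ => s) y) ∂ν
        = d1 * (∫ y, y ∂ν) + d2 * (∫ y, (1 + y) ∂ν)
          + d3 * (∫ y in Ici b, y ∂ν) := by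
    intro d1 d2 d3
    have h1 := hx_int.const_mul d1
    have h2 := hint.const_mul d2
    have h3' := hJ_int.const_mul d3
    have h12 : Integrable (fun y : ℝ => d1 * y + d2 * (1 + y)) ν := h1.add h2
    refine ⟨h12.add h3', ?_⟩
    rw [integral_add h12 h3', integral_add h1 h2,
      integral_const_mul, integral_const_mul, integral_const_mul,
      integral_indicator measurableSet_Ici]
  -- scalar inequalities
  have hL1 : ∀ z : ℝ, 0 < z → z ^ α ≤ 1 + z := by
    intro z hz
    rcases le_total z 1 with h | h
    · have := Real.rpow_le_one hz.le h hα.1.le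
      linarith
    · have := Real.rpow_le_rpow_of_exponent_le h hα.2
      rw [Real.rpow_one] at this
      linarith
  have hL2 : ∀ z : ℝ, b ≤ z → z ^ α ≤ b ^ (α - 1) * z := by
    intro z hz
    have hz0 : (0:ℝ) < z := lt_of_lt_of_le hb0 hz
    have h1 : z ^ (α - 1) ≤ b ^ (α - 1) :=
      Real.rpow_le_rpow_of_nonpos hb0 hz (by linarith [hα.2])
    have h2 : z ^ α = z ^ (α - 1) * z := by
      rw [← Real.rpow_add_one hz0.ne' (α - 1)]
      ring_nf
    rw [h2]
    exact mul_le_mul_of_nonneg_right h1 hz0.le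
  -- pointwise bound
  have hpt : ∀ x : ℝ, 0 < x → ∀ y : ℝ, 0 < y →
      |K x y * (φ (x + y) - φ x - φ y) * (1 - χ x * χ y)|
        ≤ (3 * C * Mφ * (b ^ (α - 1) * (Ici b).indicator (fun s : ℝ => s) x)) * y
          + (3 * C * Mφ * (Ici b).indicator (fun s : ℝ => s) x) * (1 + y)
          + (3 * C * Mφ * ((1 + x) + b ^ (α - 1) * x))
              * (Ici b).indicator (fun s : ℝ => s) y := by
    intro x hx0 y hy0
    obtain ⟨hK0, hKle⟩ := hK x y hx0 hy0
    have hφ1 := hφ (x + y); have hφ2 := hφ x; have hφ3 := hφ y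
    rw [abs_le] at hφ1 hφ2 hφ3
    have hΔ : |φ (x + y) - φ x - φ y| ≤ 3 * Mφ := by
      rw [abs_le]; constructor <;> linarith
    obtain ⟨hχx0, hχx1⟩ := hχ_range x
    obtain ⟨hχy0, hχy1⟩ := hχ_range y
    have hprod0 : 0 ≤ χ x * χ y := mul_nonneg hχx0 hχy0
    have hprod1 : χ x * χ y ≤ 1 := by nlinarith
    have h1χ0 : 0 ≤ 1 - χ x * χ y := by linarith
    have h1χ1 : 1 - χ x * χ y ≤ 1 := by linarith
    have hKbnd : 0 ≤ C * (x ^ α * y + x * y ^ α) := le_trans hK0 hKle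
    have step1 : |K x y * (φ (x + y) - φ x - φ y) * (1 - χ x * χ y)|
        ≤ C * (x ^ α * y + x * y ^ α) * (3 * Mφ) * (1 - χ x * χ y) := by
      rw [abs_mul, abs_mul, abs_of_nonneg hK0, abs_of_nonneg h1χ0]
      refine mul_le_mul_of_nonneg_right ?_ h1χ0
      exact mul_le_mul hKle hΔ (abs_nonneg _) hKbnd
    refine le_trans step1 ?_
    have hS0 : 0 ≤ C * (x ^ α * y + x * y ^ α) * (3 * Mφ) := by
      have : (0:ℝ) ≤ 3 * Mφ := by linarith
      exact mul_nonneg hKbnd this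
    by_cases hbx : b ≤ x
    · have hJx : (Ici b).indicator (fun s : ℝ => s) x = x :=
        Set.indicator_of_mem (by simpa [mem_Ici] using hbx) _
      have hp1 : x ^ α * y ≤ (b ^ (α - 1) * x) * y :=
        mul_le_mul_of_nonneg_right (hL2 x hbx) hy0.le
      have hp3 : x * y ^ α ≤ x * (1 + y) :=
        mul_le_mul_of_nonneg_left (hL1 y hy0) hx0.le
      have hSle : C * (x ^ α * y + x * y ^ α) * (3 * Mφ) * (1 - χ x * χ y)
          ≤ C * (x ^ α * y + x * y ^ α) * (3 * Mφ) := by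
        nlinarith
      by_cases hby : b ≤ y
      · have hJy : (Ici b).indicator (fun s : ℝ => s) y = y :=
          Set.indicator_of_mem (by simpa [mem_Ici] using hby) _
        rw [hJx, hJy]
        have tnn : 0 ≤ (3 * C * Mφ * ((1 + x) + b ^ (α - 1) * x)) * y := by
          have h4 : (0:ℝ) ≤ (1 + x) + b ^ (α - 1) * x := by nlinarith
          exact mul_nonneg (mul_nonneg h3 h4) hy0.le
        refine le_trans hSle ?_
        nlinarith [mul_le_mul_of_nonneg_left (add_le_add hp1 hp3) h3]
      · have hJy : (Ici b).indicator (fun s : ℝ => s) y = 0 :=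
          Set.indicator_of_notMem (by simpa [mem_Ici] using hby) _
        rw [hJx, hJy]
        refine le_trans hSle ?_
        nlinarith [mul_le_mul_of_nonneg_left (add_le_add hp1 hp3) h3]
    · have hJx : (Ici b).indicator (fun s : ℝ => s) x = 0 :=
        Set.indicator_of_notMem (by simpa [mem_Ici] using hbx) _
      rw [hJx]
      by_cases hby : b ≤ y
      · have hJy : (Ici b).indicator (fun s : ℝ => s) y = y :=
          Set.indicator_of_mem (by simpa [mem_Ici] using hby) _
        rw [hJy]
        have hp2 : x ^ α * y ≤ (1 + x) * y :=
          mul_le_mul_of_nonneg_right (hL1 x hx0) hy0.le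
        have hp4 : x * y ^ α ≤ x * (b ^ (α - 1) * y) :=
          mul_le_mul_of_nonneg_left (hL2 y hby) hx0.le
        have hSle : C * (x ^ α * y + x * y ^ α) * (3 * Mφ) * (1 - χ x * χ y)
            ≤ C * (x ^ α * y + x * y ^ α) * (3 * Mφ) := by
          nlinarith
        refine le_trans hSle ?_
        nlinarith [mul_le_mul_of_nonneg_left (add_le_add hp2 hp4) h3]
      · -- both below b : χ = 1, LHS = 0
        have hxb : x ≤ b := le_of_not_ge hbx
        have hyb : y ≤ b := le_of_not_ge hby
        have hJy : (Ici b).indicator (fun s : ℝ => s) y = 0 :=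
          Set.indicator_of_notMem (by simpa [mem_Ici] using hby) _
        rw [hJy, hχ_one x hx0 hxb, hχ_one y hy0 hyb]
        ring_nf
        nlinarith
  -- inner bound
  have hinner : ∀ x : ℝ, 0 < x →
      |∫ y, K x y * (φ (x + y) - φ x - φ y) * (1 - χ x * χ y) ∂ν|
        ≤ (3 * C * Mφ * (b ^ (α - 1) * (∫ y in Ici b, y ∂ν))) * x
          + (3 * C * Mφ * (∫ y in Ici b, y ∂ν)) * (1 + x)
          + (3 * C * Mφ * (b ^ (α - 1) * (∫ y, y ∂ν) + (∫ y, (1 + y) ∂ν)))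
              * (Ici b).indicator (fun s : ℝ => s) x := by
    intro x hx0
    set d1 := 3 * C * Mφ * (b ^ (α - 1) * (Ici b).indicator (fun s : ℝ => s) x) with hd1
    set d2 := 3 * C * Mφ * (Ici b).indicator (fun s : ℝ => s) x with hd2
    set d3 := 3 * C * Mφ * ((1 + x) + b ^ (α - 1) * x) with hd3
    calc |∫ y, K x y * (φ (x + y) - φ x - φ y) * (1 - χ x * χ y) ∂ν|
        ≤ ∫ y, |K x y * (φ (x + y) - φ x - φ y) * (1 - χ x * χ y)| ∂ν := by
          simp only [← Real.norm_eq_abs]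
          exact norm_integral_le_integral_norm _
      _ ≤ ∫ y, (d1 * y + d2 * (1 + y)
            + d3 * (Ici b).indicator (fun s : ℝ => s) y) ∂ν := by
          refine integral_mono_of_nonneg
            (Filter.Eventually.of_forall fun y => abs_nonneg _)
            (haux d1 d2 d3).1 ?_
          filter_upwards [hpos] with y hy0
          exact hpt x hx0 y hy0
      _ = d1 * (∫ y, y ∂ν) + d2 * (∫ y, (1 + y) ∂ν)
            + d3 * (∫ y in Ici b, y ∂ν) := (haux d1 d2 d3).2
      _ = (3 * C * Mφ * (b ^ (α - 1) * (∫ y in Ici b, y ∂ν))) * x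
          + (3 * C * Mφ * (∫ y in Ici b, y ∂ν)) * (1 + x)
          + (3 * C * Mφ * (b ^ (α - 1) * (∫ y, y ∂ν) + (∫ y, (1 + y) ∂ν)))
              * (Ici b).indicator (fun s : ℝ => s) x := by
          rw [hd1, hd2, hd3]; ring
  -- outer bound
  calc |∫ x, ∫ y, K x y * (φ (x + y) - φ x - φ y) * (1 - χ x * χ y) ∂ν ∂ν|
      ≤ ∫ x, |∫ y, K x y * (φ (x + y) - φ x - φ y) * (1 - χ x * χ y) ∂ν| ∂ν := by
        simp only [← Real.norm_eq_abs]
        exact norm_integral_le_integral_norm _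
    _ ≤ ∫ x, ((3 * C * Mφ * (b ^ (α - 1) * (∫ y in Ici b, y ∂ν))) * x
          + (3 * C * Mφ * (∫ y in Ici b, y ∂ν)) * (1 + x)
          + (3 * C * Mφ * (b ^ (α - 1) * (∫ y, y ∂ν) + (∫ y, (1 + y) ∂ν)))
              * (Ici b).indicator (fun s : ℝ => s) x) ∂ν := by
        refine integral_mono_of_nonneg
          (Filter.Eventually.of_forall fun x => abs_nonneg _)
          (haux _ _ _).1 ?_
        filter_upwards [hpos] with x hx0
        exact hinner x hx0
    _ = (3 * C * Mφ * (b ^ (α - 1) * (∫ y in Ici b, y ∂ν))) * (∫ y, y ∂ν)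
        + (3 * C * Mφ * (∫ y in Ici b, y ∂ν)) * (∫ y, (1 + y) ∂ν)
        + (3 * C * Mφ * (b ^ (α - 1) * (∫ y, y ∂ν) + (∫ y, (1 + y) ∂ν)))
            * (∫ y in Ici b, y ∂ν) := (haux _ _ _).2
    _ = 6 * C * Mφ *
        ((∫ x, (1 + x) ∂ν) * (∫ y in Ici b, y ∂ν)
          + b ^ (α - 1) * (∫ x in Ici b, x ∂ν) * (∫ y, y ∂ν)) := by ring
end
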